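/- Let B be a nonempty set, f, g₁, g₂ : B → ω with g₁(b) ≤ g₂(b) for all b ∈ B. For i = 1, 2 define the partial function 𝒰ᵢ(m) = max{f(b) : b ∈ B, gᵢ(b) ≤ m}, defined exactly when the set {f(b) : gᵢ(b) ≤ m} is nonempty and bounded above. Then typ(𝒰₂) ⪯ typ(𝒰₁) with respect to the linear order α ≺ β ≺ γ ≺ δ ≺ ε. -/

import Mathlib

/-!
If `𝒰₁` has finite domain it is of type `ε`. Otherwise every set `{f b : g₁ b ≤ m}` is
bounded, so `𝒰₂` is defined from any value of `g₂` on, its domain lies inside that of `𝒰₁`,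
and `𝒰₂ ≤ 𝒰₁` there since `{f b : g₂ b ≤ m} ⊆ {f b : g₁ b ≤ m}`. Each of the conditions "bounded", "`Dom⁺` finite",
"`Dom⁻` infinite" cutting the chain `α ≺ β ≺ γ ≺ δ` passes from `𝒰₁` to `𝒰₂` under such a
comparison, and on an infinite domain each of them bounds the type from above.
-/

def domPlus (D : Set ℕ) (g : ℕ → ℕ) : Set ℕ := {n ∈ D | n ≤ g n}

def domMinus (D : Set ℕ) (g : ℕ → ℕ) : Set ℕ := {n ∈ D | g n ≤ n}

def bddOn (D : Set ℕ) (g : ℕ → ℕ) : Prop := ∃ C, ∀ n ∈ D, g n ≤ C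

inductive Typ where
  | A | B | C | D | E
deriving DecidableEq

def typIs (D : Set ℕ) (g : ℕ → ℕ) : Typ → Prop
  | .A => D.Infinite ∧ bddOn D g
  | .B => D.Infinite ∧ (domPlus D g).Finite ∧ ¬ bddOn D g
  | .C => (domPlus D g).Infinite ∧ (domMinus D g).Infinite
  | .D => D.Infinite ∧ (domMinus D g).Finite
  | .E => D.Finite

/-- Position in the linear order α ≺ β ≺ γ ≺ δ ≺ ε. -/
def Typ.ord : Typ → ℕ
  | .A => 0
  | .B => 1
  | .C => 2
  | .D => 3
  | .E => 4

/-- `typAtMost D v s` says `typ ⪯ s`, for `v` with infinite domain `D`. -/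
def typAtMost (D : Set ℕ) (v : ℕ → ℕ) : Typ → Prop
  | .A => bddOn D v
  | .B => (domPlus D v).Finite
  | .C => (domMinus D v).Infinite
  | .D | .E => True

theorem Typ.ord_le_four (t : Typ) : t.ord ≤ 4 := by
  cases t <;> decide

section TypeClassification

variable {D : Set ℕ} {v : ℕ → ℕ}

theorem domPlus_finite_of_bddOn (h : bddOn D v) : (domPlus D v).Finite := by
  obtain ⟨C, hC⟩ := h
  exact (Set.finite_Iic C).subset fun n ⟨hn, hle⟩ => hle.trans (hC n hn)

theorem domPlus_infinite_of_domMinus_finite (hD : D.Infinite) (h : (domMinus D v).Finite) :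
    (domPlus D v).Infinite :=
  (hD.sdiff h).mono fun _ hn => ⟨hn.1, le_of_not_ge fun hle => hn.2 ⟨hn.1, hle⟩⟩

theorem typIs_eq_E_of_finite (hD : D.Finite) {t : Typ} (ht : typIs D v t) : t = .E := by
  cases t
  case E => rfl
  all_goals exfalso
  case A | B | D => exact ht.1 hD
  case C => exact ht.1 (hD.subset fun _ hn => hn.1)

theorem typIs.typAtMost {t : Typ} (ht : typIs D v t) : _root_.typAtMost D v t := by
  cases t
  case A | C => exact ht.2
  case B => exact ht.2.1
  case D | E => trivial

theorem typIs.ord_le_of_typAtMost (hD : D.Infinite) {t s : Typ} (ht : typIs D v t)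
    (hs : _root_.typAtMost D v s) : t.ord ≤ s.ord := by
  cases t
  case E => exact absurd ht hD
  all_goals cases s
  all_goals first | decide | exfalso
  case B.A => exact ht.2.2 hs
  case C.A => exact ht.1 (domPlus_finite_of_bddOn hs)
  case D.A => exact domPlus_infinite_of_domMinus_finite hD ht.2 (domPlus_finite_of_bddOn hs)
  case C.B => exact ht.1 hs
  case D.B => exact domPlus_infinite_of_domMinus_finite hD ht.2 hs
  case D.C => exact hs ht.2

end TypeClassification

section Comparison

variable {D₁ D₂ : Set ℕ} {v₁ v₂ : ℕ → ℕ}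

theorem typAtMost_of_le (hsub : D₂ ⊆ D₁) (hcofin : (D₁ \ D₂).Finite)
    (hv : ∀ n ∈ D₂, v₂ n ≤ v₁ n) {s : Typ} (hs : typAtMost D₁ v₁ s) : typAtMost D₂ v₂ s := by
  cases s
  case A =>
    obtain ⟨C, hC⟩ := hs
    exact ⟨C, fun n hn => (hv n hn).trans (hC n (hsub hn))⟩
  case B =>
    exact hs.subset fun n ⟨hn, hle⟩ => ⟨hsub hn, hle.trans (hv n hn)⟩
  case C =>
    refine fun hfin => hs ((hcofin.union hfin).subset fun n ⟨hn, hle⟩ => ?_)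
    by_cases hn₂ : n ∈ D₂
    · exact Or.inr ⟨hn₂, (hv n hn₂).trans hle⟩
    · exact Or.inl ⟨hn, hn₂⟩
  case D | E => trivial

end Comparison

section Sublevel

variable {B : Type*} (f : B → ℕ)

def valuesBelow (g : B → ℕ) (m : ℕ) : Set ℕ := {k | ∃ b, g b ≤ m ∧ f b = k}

/-- The domain of `𝒰(m) = max {f b : g b ≤ m}`. -/
def maxDomain (g : B → ℕ) : Set ℕ := {m | (∃ b, g b ≤ m) ∧ BddAbove (valuesBelow f g m)}

variable {f} {g g₁ g₂ : B → ℕ}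

theorem valuesBelow_mono {m m' : ℕ} (h : m ≤ m') : valuesBelow f g m ⊆ valuesBelow f g m' :=
  fun _ ⟨b, hb, hk⟩ => ⟨b, hb.trans h, hk⟩

theorem valuesBelow_anti (hle : ∀ b, g₁ b ≤ g₂ b) (m : ℕ) :
    valuesBelow f g₂ m ⊆ valuesBelow f g₁ m :=
  fun _ ⟨b, hb, hk⟩ => ⟨b, (hle b).trans hb, hk⟩

theorem bddAbove_valuesBelow (h : (maxDomain f g).Infinite) (m : ℕ) :
    BddAbove (valuesBelow f g m) := by
  obtain ⟨m', hm', hlt⟩ := h.exists_gt m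
  exact hm'.2.mono (valuesBelow_mono hlt.le)

theorem maxDomain_subset (hle : ∀ b, g₁ b ≤ g₂ b) (h₁ : (maxDomain f g₁).Infinite) :
    maxDomain f g₂ ⊆ maxDomain f g₁ := fun m ⟨⟨b, hb⟩, _⟩ =>
  ⟨⟨b, (hle b).trans hb⟩, bddAbove_valuesBelow h₁ m⟩

theorem Ici_subset_maxDomain (hle : ∀ b, g₁ b ≤ g₂ b) (h₁ : (maxDomain f g₁).Infinite)
    (b : B) : Set.Ici (g₂ b) ⊆ maxDomain f g₂ := fun m hm =>
  ⟨⟨b, hm⟩, (bddAbove_valuesBelow h₁ m).mono (valuesBelow_anti hle m)⟩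

theorem maxDomain_diff_finite (hle : ∀ b, g₁ b ≤ g₂ b) (h₁ : (maxDomain f g₁).Infinite) :
    (maxDomain f g₁ \ maxDomain f g₂).Finite := by
  obtain ⟨m, ⟨b, -⟩, -⟩ := h₁.nonempty
  exact (Set.finite_Iio (g₂ b)).subset fun n hn =>
    Set.mem_Iio.2 <| lt_of_not_ge fun hge => hn.2 (Ici_subset_maxDomain hle h₁ b hge)

theorem sSup_valuesBelow_le (hle : ∀ b, g₁ b ≤ g₂ b) (h₁ : (maxDomain f g₁).Infinite)
    {m : ℕ} (hm : m ∈ maxDomain f g₂) :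
    sSup (valuesBelow f g₂ m) ≤ sSup (valuesBelow f g₁ m) := by
  obtain ⟨⟨b, hb⟩, -⟩ := hm
  exact csSup_le_csSup (bddAbove_valuesBelow h₁ m) ⟨f b, b, hb, rfl⟩ (valuesBelow_anti hle m)

end Sublevel

theorem stmt10_general {B : Type*} (f g₁ g₂ : B → ℕ)
    (hle : ∀ b, g₁ b ≤ g₂ b)
    (dom₁ : Set ℕ) (val₁ : ℕ → ℕ) (dom₂ : Set ℕ) (val₂ : ℕ → ℕ)
    (hdom₁ : dom₁ = {m | (∃ b, g₁ b ≤ m) ∧ BddAbove {k | ∃ b, g₁ b ≤ m ∧ f b = k}})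
    (hval₁ : ∀ m ∈ dom₁, val₁ m = sSup {k | ∃ b, g₁ b ≤ m ∧ f b = k})
    (hdom₂ : dom₂ = {m | (∃ b, g₂ b ≤ m) ∧ BddAbove {k | ∃ b, g₂ b ≤ m ∧ f b = k}})
    (hval₂ : ∀ m ∈ dom₂, val₂ m = sSup {k | ∃ b, g₂ b ≤ m ∧ f b = k})
    (t₁ t₂ : Typ) (ht₁ : typIs dom₁ val₁ t₁) (ht₂ : typIs dom₂ val₂ t₂) :
    t₂.ord ≤ t₁.ord := by
  change dom₁ = maxDomain f g₁ at hdom₁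
  change dom₂ = maxDomain f g₂ at hdom₂
  subst hdom₁ hdom₂
  rcases (maxDomain f g₁).finite_or_infinite with hfin | hinf
  · rw [typIs_eq_E_of_finite hfin ht₁]
    exact t₂.ord_le_four
  have hsub := maxDomain_subset hle hinf
  have hcofin := maxDomain_diff_finite hle hinf
  have hval : ∀ m ∈ maxDomain f g₂, val₂ m ≤ val₁ m := fun m hm => by
    rw [hval₂ m hm, hval₁ m (hsub hm)]
    exact sSup_valuesBelow_le hle hinf hm
  have h₂ : (maxDomain f g₂).Infinite :=
    (hinf.sdiff hcofin).mono (Set.sdiff_sdiff_cancel_left hsub).subset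
  exact ht₂.ord_le_of_typAtMost h₂ (typAtMost_of_le hsub hcofin hval ht₁.typAtMost)

/-- If `g₁ ≤ g₂` pointwise, then for `𝒰ᵢ(m) = max {f b : gᵢ b ≤ m}` we have
`typ(𝒰₂) ⪯ typ(𝒰₁)`. -/
theorem stmt10 {B : Type*} [Nonempty B] (f g₁ g₂ : B → ℕ)
    (hle : ∀ b, g₁ b ≤ g₂ b)
    (dom₁ : Set ℕ) (val₁ : ℕ → ℕ) (dom₂ : Set ℕ) (val₂ : ℕ → ℕ)
    (hdom₁ : dom₁ = {m | (∃ b, g₁ b ≤ m) ∧ BddAbove {k | ∃ b, g₁ b ≤ m ∧ f b = k}})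
    (hval₁ : ∀ m ∈ dom₁, val₁ m = sSup {k | ∃ b, g₁ b ≤ m ∧ f b = k})
    (hdom₂ : dom₂ = {m | (∃ b, g₂ b ≤ m) ∧ BddAbove {k | ∃ b, g₂ b ≤ m ∧ f b = k}})
    (hval₂ : ∀ m ∈ dom₂, val₂ m = sSup {k | ∃ b, g₂ b ≤ m ∧ f b = k})
    (t₁ t₂ : Typ) (ht₁ : typIs dom₁ val₁ t₁) (ht₂ : typIs dom₂ val₂ t₂) :
    t₂.ord ≤ t₁.ord :=
  stmt10_general f g₁ g₂ hle dom₁ val₁ dom₂ val₂ hdom₁ hval₁ hdom₂ hval₂ t₁ t₂ ht₁ ht₂
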